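/- In the queueing construction, there exists M₀ such that for all integers M ≥ M₀ and all j with 1 ≤ j ≤ M, the jump-to-c condition holds at (0,μ_j): Σ_{(i',μ_{j'}) ≠ (0,μ_j)} |A^{i'}(μ_j|μ_{j'})·Q^{μ_j}(0|i')|·g(i',μ_{j'}) ≥ Σ_{(i',μ_{j'}) ≠ (0,μ_j)} |A^0(μ_{j'}|μ_j)·Q^{μ_{j'}}(i'|0)|·g(0,μ_j); hence, under the minimal choice of τ_ε, a jump from (0,μ_j) to the transition state c is possible for every j ≠ 0 when M is large enough. -/

import Mathlib

noncomputable section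

/-- `μ_j = 1/2 + j/M`. -/
def μval (M j : ℕ) : ℝ := 1 / 2 + (j : ℝ) / (M : ℝ)

/-- The queueing generator `Q^μ` on `X = {0,…,N}`: `Q^μ(i+1|i) = 1`, `Q^μ(i−1|i) = μ`,
diagonal `−1` at `0`, `−μ` at `N`, `−(1+μ)` in between, other entries `0`;
`Qq N μ i' i = Q^μ(i'|i)`. -/
def Qq (N : ℕ) (μ : ℝ) (i' i : Fin (N + 1)) : ℝ :=
  if i'.val = i.val + 1 then 1
  else if i'.val + 1 = i.val then μ
  else if i' = i then -((if i.val < N then (1 : ℝ) else 0) + (if 0 < i.val then μ else 0))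
  else 0

/-- The upward jump rate of the environment chain `A^i`: `i` for `i ≥ 1`, `1/M²` for `i = 0`. -/
def upRate (M i : ℕ) : ℝ := if i = 0 then ((M : ℝ) ^ 2)⁻¹ else (i : ℝ)

/-- The environment generator `A^i` on `Z = {μ_0,…,μ_M}` (indexed by `j`):
`A^i(μ_{j+1}|μ_j) = upRate M i`, `A^i(μ_{j−1}|μ_j) = 1`, diagonal making row sums zero,
other entries `0`; `Aq M i j' j = A^i(μ_{j'}|μ_j)`. -/
def Aq (M i : ℕ) (j' j : Fin (M + 1)) : ℝ :=
  if j'.val = j.val + 1 then upRate M i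
  else if j'.val + 1 = j.val then 1
  else if j' = j then -((if j.val < M then upRate M i else 0) + (if 0 < j.val then (1 : ℝ) else 0))
  else 0

/-- `η(μ) = Σ_{i=0}^{N} μ^{−i}`. -/
def ηq (N : ℕ) (μ : ℝ) : ℝ := ∑ k ∈ Finset.range (N + 1), μ⁻¹ ^ k

/-- `m^μ(i) = μ^{−i}/η(μ)`. -/
def mq (N : ℕ) (μ : ℝ) (i : Fin (N + 1)) : ℝ := μ⁻¹ ^ i.val / ηq N μ

/-- `σ(i) = Σ_{j=0}^{M} i^j` for `i ≥ 1`, and `σ(0) = Σ_{j=0}^{M} M^{−2j}`. -/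
def σq (M i : ℕ) : ℝ := ∑ j ∈ Finset.range (M + 1), upRate M i ^ j

/-- `ν^i(μ_j) = i^j/σ(i)` for `i ≥ 1`, and `ν^0(μ_j) = M^{−2j}/σ(0)`. -/
def νq (M i : ℕ) (j : Fin (M + 1)) : ℝ := upRate M i ^ j.val / σq M i

/-- The product measure `g(i,μ_j) = m^{μ_j}(i)·ν^i(μ_j)` on the natural space. -/
def gq (N M : ℕ) (p : Fin (N + 1) × Fin (M + 1)) : ℝ :=
  mq N (μval M p.2.val) p.1 * νq M p.1.val p.2

/-- The minimal choice `τ_ε(i,μ)`: the maximum of the two ratios in (12). -/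
def τq (N M : ℕ) (p : Fin (N + 1) × Fin (M + 1)) : ℝ :=
  max
    ((∑ s ∈ Finset.univ.erase p,
        |Aq M s.1.val p.2 s.2 * Qq N (μval M p.2.val) p.1 s.1| * gq N M s) /
      (Aq M p.1.val p.2 p.2 * Qq N (μval M p.2.val) p.1 p.1 * gq N M p))
    ((∑ s ∈ Finset.univ.erase p,
        |Aq M p.1.val s.2 p.2 * Qq N (μval M s.2.val) s.1 p.1|) /
      (Aq M p.1.val p.2 p.2 * Qq N (μval M p.2.val) p.1 p.1))

/-- The natural-space part of the combined generator:
`R_ε(i',μ'|i,μ) = |A^i(μ'|μ)·Q^{μ'}(i'|i)|` off the diagonal and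
`R_ε(i,μ|i,μ) = −τ_ε(i,μ)·|A^i(μ|μ)·Q^μ(i|i)|`; `Rnat N M s p = R_ε(s|p)`. -/
def Rnat (N M : ℕ) (s p : Fin (N + 1) × Fin (M + 1)) : ℝ :=
  if s = p then -τq N M p * |Aq M p.1.val p.2 p.2 * Qq N (μval M p.2.val) p.1 p.1|
  else |Aq M p.1.val s.2 p.2 * Qq N (μval M s.2.val) s.1 p.1|

/-- Rate into the maintenance state: `R_ε(c_i|(i,μ)) = −Σ_{(i',μ')} R_ε(i',μ'|(i,μ))`. -/
def RcIn (N M : ℕ) (p : Fin (N + 1) × Fin (M + 1)) : ℝ :=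
  -∑ s : Fin (N + 1) × Fin (M + 1), Rnat N M s p

/-- Rate out of the maintenance state:
`R_ε((i,μ)|c_i) = −(1/ε)·Σ_{(i',μ')} R_ε((i,μ)|(i',μ'))·g(i',μ')`. -/
def RcOut (N M : ℕ) (ε : ℝ) (p : Fin (N + 1) × Fin (M + 1)) : ℝ :=
  -(1 / ε) * ∑ s : Fin (N + 1) × Fin (M + 1), Rnat N M p s * gq N M s

/-- The recursively defined pair `(V_r^{(j)}, V_c^{(j)})` with `j = N − t` (fuel `t`). -/
def Vrc (N M : ℕ) (ε : ℝ) : ℕ → ℝ × ℝ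
  | 0 =>
      (∑ μ : Fin (M + 1),
          RcIn N M (⟨N, Nat.lt_succ_self N⟩, μ) * gq N M (⟨N, Nat.lt_succ_self N⟩, μ),
        ε * ∑ μ : Fin (M + 1), RcOut N M ε (⟨N, Nat.lt_succ_self N⟩, μ))
  | t + 1 =>
      let v := Vrc N M ε t
      let j : Fin (N + 1) := ⟨N - (t + 1), by omega⟩
      ((∑ μ : Fin (M + 1), RcIn N M (j, μ) * gq N M (j, μ)) + max (v.1 - v.2) 0,
        ε * (∑ μ : Fin (M + 1), RcOut N M ε (j, μ)) + max (v.2 - v.1) 0)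

/-- `(V_r^{(j)}, V_c^{(j)})` for `1 ≤ j ≤ N`. -/
def Vj (N M : ℕ) (ε : ℝ) (j : ℕ) : ℝ × ℝ := Vrc N M ε (N - j)

/-- The combined generator `R_ε` of the multiple-maintenance-state construction on
`Ŷ = (X×Z) ⊕ {c_0,…,c_N}`; `Rhat N M ε s p = R_ε(s|p)`. -/
def Rhat (N M : ℕ) (ε : ℝ) :
    ((Fin (N + 1) × Fin (M + 1)) ⊕ Fin (N + 1)) →
      ((Fin (N + 1) × Fin (M + 1)) ⊕ Fin (N + 1)) → ℝ
  | Sum.inl s, Sum.inl p => Rnat N M s p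
  | Sum.inr a, Sum.inl p => if a = p.1 then RcIn N M p else 0
  | Sum.inl s, Sum.inr a => if a = s.1 then RcOut N M ε s else 0
  | Sum.inr a, Sum.inr b =>
      if a = b then
        if b.val = 0 then
          -((∑ μ : Fin (M + 1), RcOut N M ε (b, μ)) +
              max ((Vj N M ε 1).2 - (Vj N M ε 1).1) 0 / ε)
        else -(max (Vj N M ε b.val).1 (Vj N M ε b.val).2) / ε
      else if a.val = b.val + 1 then
        max ((Vj N M ε (b.val + 1)).2 - (Vj N M ε (b.val + 1)).1) 0 / ε
      else if a.val + 1 = b.val then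
        max ((Vj N M ε b.val).1 - (Vj N M ε b.val).2) 0 / ε
      else 0

/-- The target stationary measure on `Ŷ`: `g` on the natural space, `ε` on each `c_i`. -/
def ghat (N M : ℕ) (ε : ℝ) : ((Fin (N + 1) × Fin (M + 1)) ⊕ Fin (N + 1)) → ℝ :=
  Sum.elim (gq N M) fun _ => ε


/-!
At `(0, μ_j)` the outflow side of the jump condition carries the factor `g(0, μ_j)`, and
`ν^0(μ_j) ≤ M^{-2j} ≤ M^{-2}` because the environment chain `A^0` moves up only at rate `1/M²`;
the matrices `A^0` and `Q^μ` are birth–death generators, so the absolute values of a column sum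
to twice the diagonal rate, which bounds the remaining factor by `8`. The inflow side contains
the term from `(1, μ_j)`, and `ν^1` is uniform, so that term alone is at least `1/(η(μ_j)(M+1))`.
Since `8/M² ≤ 1/(M+1)` once `M ≥ 9`, the condition holds, and it says precisely that the first
of the two ratios defining `τ_ε(0, μ_j)` is the larger one.
-/

def birthDeath (n : ℕ) (up down : ℝ) (k' k : Fin (n + 1)) : ℝ :=
  if k'.val = k.val + 1 then up
  else if k'.val + 1 = k.val then down
  else if k' = k then -((if k.val < n then up else 0) + (if 0 < k.val then down else 0))
  else 0

theorem Qq_eq_birthDeath (N : ℕ) (μ : ℝ) : Qq N μ = birthDeath N 1 μ := rfl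

theorem Aq_eq_birthDeath (M i : ℕ) : Aq M i = birthDeath M (upRate M i) 1 := rfl

section BirthDeath

variable {n : ℕ} {up down : ℝ}

theorem birthDeath_self (k : Fin (n + 1)) :
    birthDeath n up down k k =
      -((if k.val < n then up else 0) + (if 0 < k.val then down else 0)) := by
  simp [birthDeath]

theorem birthDeath_self_le_neg_down (hup : 0 ≤ up) {k : Fin (n + 1)} (hk : 0 < k.val) :
    birthDeath n up down k k ≤ -down := by
  rw [birthDeath_self, if_pos hk]
  split_ifs <;> linarith

theorem neg_birthDeath_self_le (hup : 0 ≤ up) (hdown : 0 ≤ down) (k : Fin (n + 1)) :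
    -birthDeath n up down k k ≤ up + down := by
  rw [birthDeath_self, neg_neg]
  split_ifs <;> linarith

theorem birthDeath_zero_right_down_irrel (down' : ℝ) (k' : Fin (n + 1)) :
    birthDeath n up down k' 0 = birthDeath n up down' k' 0 := by
  simp [birthDeath]

theorem abs_birthDeath (hup : 0 ≤ up) (hdown : 0 ≤ down) (k' k : Fin (n + 1)) :
    |birthDeath n up down k' k| =
      (if k'.val = k.val + 1 then up else 0) + (if k'.val + 1 = k.val then down else 0) +
        (if k' = k then -birthDeath n up down k k else 0) := by
  have hself := neg_birthDeath_self_le hup hdown k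
  unfold birthDeath at hself ⊢
  simp only [Fin.ext_iff] at hself ⊢
  split_ifs at hself ⊢ <;> first
    | omega
    | (rw [abs_of_nonpos (by linarith)]; ring)
    | simp [abs_of_nonneg, *]

theorem Fin.sum_univ_ite_val_eq {α : Type*} [AddCommMonoid α] (m t : ℕ) (c : α) :
    ∑ k : Fin m, (if k.val = t then c else 0) = if t < m then c else 0 := by
  rw [Fin.sum_univ_eq_sum_range (fun k => if k = t then c else 0), Finset.sum_ite_eq']
  simp

theorem sum_abs_birthDeath (hup : 0 ≤ up) (hdown : 0 ≤ down) (k : Fin (n + 1)) :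
    ∑ k', |birthDeath n up down k' k| = -2 * birthDeath n up down k k := by
  have hdown_sum : ∑ k' : Fin (n + 1), (if k'.val + 1 = k.val then down else 0) =
      if 0 < k.val then down else 0 := by
    rcases k with ⟨_ | m, hm⟩
    · simp
    · simp only [Nat.add_right_cancel_iff, Fin.sum_univ_ite_val_eq]
      simp [show m < n + 1 by omega]
  simp only [abs_birthDeath hup hdown, Finset.sum_add_distrib, Fin.sum_univ_ite_val_eq,
    hdown_sum, Finset.sum_ite_eq', Finset.mem_univ, if_true]
  rw [birthDeath_self]
  simp only [Nat.add_lt_add_iff_right]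
  ring

end BirthDeath

section StationaryMeasure

theorem μval_pos (M j : ℕ) : 0 < μval M j := by
  unfold μval; positivity

theorem upRate_nonneg (M i : ℕ) : 0 ≤ upRate M i := by
  unfold upRate; split_ifs <;> positivity

theorem upRate_pos {M : ℕ} (hM : 0 < M) (i : ℕ) : 0 < upRate M i := by
  unfold upRate; split_ifs <;> positivity

theorem upRate_zero_le_one {M : ℕ} (hM : 1 ≤ M) : upRate M 0 ≤ 1 := by
  simp only [upRate, if_true]
  exact inv_le_one_of_one_le₀ (one_le_pow₀ (by exact_mod_cast hM))

theorem one_le_σq (M i : ℕ) : 1 ≤ σq M i := by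
  unfold σq
  simpa using Finset.single_le_sum (f := fun k => upRate M i ^ k)
    (fun k _ => pow_nonneg (upRate_nonneg M i) k) (Finset.mem_range.2 (Nat.succ_pos M))

theorem σq_one (M : ℕ) : σq M 1 = M + 1 := by
  simp [σq, upRate]

theorem ηq_pos (N : ℕ) {μ : ℝ} (hμ : 0 < μ) : 0 < ηq N μ := by
  unfold ηq
  exact Finset.sum_pos (fun k _ => by positivity) Finset.nonempty_range_add_one

theorem gq_nonneg (N M : ℕ) (s : Fin (N + 1) × Fin (M + 1)) : 0 ≤ gq N M s := by
  have := ηq_pos N (μval_pos M s.2.val)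
  have := one_le_σq M s.1.val
  have := upRate_nonneg M s.1.val
  have := μval_pos M s.2.val
  unfold gq mq νq
  positivity

theorem gq_pos {N M : ℕ} (hM : 0 < M) (s : Fin (N + 1) × Fin (M + 1)) : 0 < gq N M s := by
  have := ηq_pos N (μval_pos M s.2.val)
  have := one_le_σq M s.1.val
  have := upRate_pos hM s.1.val
  have := μval_pos M s.2.val
  unfold gq mq νq
  positivity

theorem gq_zero_le {N M : ℕ} (j : Fin (M + 1)) (hj : 1 ≤ j.val) :
    gq N M (0, j) ≤ (ηq N (μval M j.val))⁻¹ * ((M : ℝ) ^ 2)⁻¹ := by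
  have hrate := upRate_zero_le_one (hj.trans (Nat.lt_succ_iff.1 j.isLt))
  have hν : νq M 0 j ≤ upRate M 0 := calc
    νq M 0 j ≤ upRate M 0 ^ j.val :=
      div_le_self (pow_nonneg (upRate_nonneg M 0) _) (one_le_σq M 0)
    _ ≤ upRate M 0 := pow_le_of_le_one (upRate_nonneg M 0) hrate (by omega)
  have := ηq_pos N (μval_pos M j.val)
  simp only [gq, mq, Fin.val_zero, pow_zero, one_div]
  simpa [upRate] using mul_le_mul_of_nonneg_left hν (inv_nonneg.2 this.le)

theorem gq_one {N M : ℕ} (i : Fin (N + 1)) (hi : i.val = 1) (j : Fin (M + 1)) :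
    gq N M (i, j) = (μval M j.val)⁻¹ / ηq N (μval M j.val) * ((M : ℝ) + 1)⁻¹ := by
  simp [gq, mq, νq, hi, σq_one, upRate]

end StationaryMeasure

theorem Qq_zero_zero {N : ℕ} (hN : 1 ≤ N) (μ : ℝ) : Qq N μ 0 0 = -1 := by
  simp [Qq_eq_birthDeath, birthDeath_self, show 0 < N by omega]

theorem sum_abs_Aq_zero_mul_Qq_le {N M : ℕ} (hN : 1 ≤ N) (hM : 1 ≤ M) (j : Fin (M + 1)) :
    ∑ s : Fin (N + 1) × Fin (M + 1), |Aq M 0 s.2 j * Qq N (μval M s.2.val) s.1 0| ≤ 8 := by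
  have hrate := upRate_zero_le_one hM
  have hA := neg_birthDeath_self_le (upRate_nonneg M 0) zero_le_one j
  calc _ = (∑ i', |Qq N 1 i' 0|) * ∑ j', |Aq M 0 j' j| := by
        rw [Finset.sum_mul_sum, Fintype.sum_prod_type]
        refine Finset.sum_congr rfl fun i' _ => Finset.sum_congr rfl fun j' _ => ?_
        rw [abs_mul, mul_comm, Qq_eq_birthDeath, Qq_eq_birthDeath,
          birthDeath_zero_right_down_irrel 1]
    _ = (-2 * Qq N 1 0 0) * (-2 * Aq M 0 j j) := by
        rw [Qq_eq_birthDeath, Aq_eq_birthDeath, sum_abs_birthDeath zero_le_one zero_le_one,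
          sum_abs_birthDeath (upRate_nonneg M 0) zero_le_one]
    _ ≤ 8 := by
        rw [Qq_zero_zero hN, Aq_eq_birthDeath]
        linarith

theorem inv_le_abs_Aq_mul_Qq_mul_gq {N M : ℕ} (j : Fin (M + 1)) (hj : 1 ≤ j.val)
    (i : Fin (N + 1)) (hi : i.val = 1) :
    (ηq N (μval M j.val))⁻¹ * ((M : ℝ) + 1)⁻¹ ≤
      |Aq M 1 j j * Qq N (μval M j.val) 0 i| * gq N M (i, j) := by
  have hA : Aq M 1 j j ≤ -1 := birthDeath_self_le_neg_down (upRate_nonneg M 1) hj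
  have hQ : Qq N (μval M j.val) 0 i = μval M j.val := by simp [Qq, hi]
  have hμ := μval_pos M j.val
  have hη := ηq_pos N hμ
  rw [gq_one i hi, hQ, abs_mul, abs_of_pos hμ, abs_of_neg (by linarith)]
  have : 0 ≤ (ηq N (μval M j.val))⁻¹ * ((M : ℝ) + 1)⁻¹ := by positivity
  calc _ ≤ -Aq M 1 j j * ((ηq N (μval M j.val))⁻¹ * ((M : ℝ) + 1)⁻¹) := by nlinarith
    _ = _ := by field_simp

theorem eight_mul_inv_sq_le_inv_add_one {M : ℕ} (hM : 9 ≤ M) :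
    8 * ((M : ℝ) ^ 2)⁻¹ ≤ ((M : ℝ) + 1)⁻¹ := by
  have hM' : (9 : ℝ) ≤ M := by exact_mod_cast hM
  rw [← div_eq_mul_inv, div_le_iff₀ (by positivity), inv_mul_eq_div,
    le_div_iff₀ (by positivity)]
  nlinarith

theorem max_div_eq_left_of_mul_le {L R D g : ℝ} (hD : 0 < D) (hg : 0 < g) (h : R * g ≤ L) :
    max (L / (D * g)) (R / D) = L / (D * g) := by
  refine max_eq_left ?_
  rw [← mul_div_mul_right R D hg.ne']
  exact div_le_div_of_nonneg_right h (mul_pos hD hg).le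

theorem jumpOut_le_jumpIn {N M : ℕ} (hN : 1 ≤ N) (hM : 9 ≤ M) (j : Fin (M + 1))
    (hj : 1 ≤ j.val) :
    ∑ s ∈ Finset.univ.erase ((0 : Fin (N + 1)), j),
        |Aq M 0 s.2 j * Qq N (μval M s.2.val) s.1 0| * gq N M (0, j) ≤
      ∑ s ∈ Finset.univ.erase ((0 : Fin (N + 1)), j),
        |Aq M s.1.val j s.2 * Qq N (μval M j.val) 0 s.1| * gq N M s := by
  let i₁ : Fin (N + 1) := ⟨1, by omega⟩
  calc
    ∑ s ∈ Finset.univ.erase ((0 : Fin (N + 1)), j),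
        |Aq M 0 s.2 j * Qq N (μval M s.2.val) s.1 0| * gq N M (0, j)
      ≤ (∑ s : Fin (N + 1) × Fin (M + 1), |Aq M 0 s.2 j * Qq N (μval M s.2.val) s.1 0|) *
          gq N M (0, j) := by
        rw [← Finset.sum_mul]
        exact mul_le_mul_of_nonneg_right
          (Finset.sum_le_univ_sum_of_nonneg fun _ => abs_nonneg _) (gq_nonneg N M _)
    _ ≤ 8 * ((ηq N (μval M j.val))⁻¹ * ((M : ℝ) ^ 2)⁻¹) :=
        mul_le_mul (sum_abs_Aq_zero_mul_Qq_le hN (by omega) j) (gq_zero_le j hj)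
          (gq_nonneg N M _) (by norm_num)
    _ ≤ (ηq N (μval M j.val))⁻¹ * ((M : ℝ) + 1)⁻¹ := by
        rw [mul_left_comm]
        exact mul_le_mul_of_nonneg_left (eight_mul_inv_sq_le_inv_add_one hM)
          (inv_nonneg.2 (ηq_pos N (μval_pos M j.val)).le)
    _ ≤ |Aq M 1 j j * Qq N (μval M j.val) 0 i₁| * gq N M (i₁, j) :=
        inv_le_abs_Aq_mul_Qq_mul_gq j hj i₁ rfl
    _ ≤ ∑ s ∈ Finset.univ.erase ((0 : Fin (N + 1)), j),
          |Aq M s.1.val j s.2 * Qq N (μval M j.val) 0 s.1| * gq N M s :=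
        Finset.single_le_sum (f := fun s : Fin (N + 1) × Fin (M + 1) =>
          |Aq M s.1.val j s.2 * Qq N (μval M j.val) 0 s.1| * gq N M s)
          (fun s _ => mul_nonneg (abs_nonneg _) (gq_nonneg N M s))
          (a := (i₁, j)) (by simp [i₁, Fin.ext_iff])

theorem stmt14 (N : ℕ) (hN : 1 ≤ N) :
    ∃ M₀ : ℕ, ∀ M : ℕ, M₀ ≤ M → ∀ j : Fin (M + 1), 1 ≤ j.val →
      (∑ s ∈ Finset.univ.erase ((0 : Fin (N + 1)), j),
          |Aq M s.1.val j s.2 * Qq N (μval M j.val) (0 : Fin (N + 1)) s.1| * gq N M s ≥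
        ∑ s ∈ Finset.univ.erase ((0 : Fin (N + 1)), j),
          |Aq M 0 s.2 j * Qq N (μval M s.2.val) s.1 (0 : Fin (N + 1))| *
            gq N M ((0 : Fin (N + 1)), j)) ∧
      τq N M ((0 : Fin (N + 1)), j) =
        (∑ s ∈ Finset.univ.erase ((0 : Fin (N + 1)), j),
            |Aq M s.1.val j s.2 * Qq N (μval M j.val) (0 : Fin (N + 1)) s.1| * gq N M s) /
          (Aq M 0 j j * Qq N (μval M j.val) (0 : Fin (N + 1)) (0 : Fin (N + 1)) *
            gq N M ((0 : Fin (N + 1)), j)) := by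
  refine ⟨9, fun M hM j hj => ⟨jumpOut_le_jumpIn hN hM j hj, ?_⟩⟩
  have hD : 0 < Aq M 0 j j * Qq N (μval M j.val) 0 0 := by
    have hA : Aq M 0 j j ≤ -1 := birthDeath_self_le_neg_down (upRate_nonneg M 0) hj
    rw [Qq_zero_zero hN]
    linarith
  unfold τq
  simp only [Fin.val_zero]
  exact max_div_eq_left_of_mul_le hD (gq_pos (by omega) _)
    (by rw [Finset.sum_mul]; exact jumpOut_le_jumpIn hN hM j hj)
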